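/- arXiv:math-ph/0701027 — 3 statements merged into one kernel-verified Lean document; each statement's English description precedes it below -/
import Mathlib

section
/- Let v_1, …, v_N ∈ ℝ^n be fixed vectors and let H(q,p) = ½⟨p,p⟩ + Σ_{i=1}^N exp(⟨v_i, q⟩) on ℝ^{2n}, where ⟨·,·⟩ is the standard inner product. If (q(t), p(t)) is a solution of Hamilton's equations q̇_k = ∂H/∂p_k, ṗ_k = −∂H/∂q_k, then the functions a_i(t) = −exp(⟨v_i, q(t)⟩) and b_i(t) = ⟨v_i, p(t)⟩, i = 1, …, N, satisfy the polynomial system ȧ_k = a_k b_k and ḃ_k = Σ_{i=1}^N M_{ki} a_i for k = 1, …, N, where M_{ki} = ⟨v_k, v_i⟩. -/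
/-!
The Hamiltonian is `½ p ⬝ᵥ p + Σᵢ exp (vᵢ ⬝ᵥ q)`, so Hamilton's equations read `q̇ = p` and
`ṗ = -Σᵢ exp (vᵢ ⬝ᵥ q) • vᵢ`. Since `aₖ` and `bₖ` are obtained from `q` and `p` through the linear
forms `vₖ ⬝ᵥ ·`, the chain rule gives `ȧₖ = aₖ (vₖ ⬝ᵥ q̇) = aₖ bₖ` and
`ḃₖ = vₖ ⬝ᵥ ṗ = Σᵢ (vₖ ⬝ᵥ vᵢ) aᵢ`.
-/

/-- The Hamiltonian with exponential interaction:
`H(q,p) = ½⟨p,p⟩ + Σ_{i=1}^N exp(⟨v_i, q⟩)` on `ℝ^{2n}`. -/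
noncomputable def expHam (n N : ℕ) (v : Fin N → Fin n → ℝ) :
    (Fin n → ℝ) → (Fin n → ℝ) → ℝ := fun q p =>
  (1 / 2) * ∑ k, p k * p k + ∑ i, Real.exp (∑ k, v i k * q k)

open Matrix Function

section DotProduct

variable {ι : Type*} [Fintype ι] {f g : ℝ → ι → ℝ} {f' g' : ι → ℝ} {t : ℝ}

theorem HasDerivAt.dotProduct (hf : HasDerivAt f f' t) (hg : HasDerivAt g g' t) :
    HasDerivAt (fun s => f s ⬝ᵥ g s) (f' ⬝ᵥ g t + f t ⬝ᵥ g') t := by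
  refine (HasDerivAt.fun_sum (u := Finset.univ) fun j _ =>
    (hasDerivAt_pi.1 hf j).fun_mul (hasDerivAt_pi.1 hg j)).congr_deriv ?_
  rw [Finset.sum_add_distrib]
  rfl

theorem HasDerivAt.const_dotProduct (w : ι → ℝ) (hg : HasDerivAt g g' t) :
    HasDerivAt (fun s => w ⬝ᵥ g s) (w ⬝ᵥ g') t := by
  simpa using (hasDerivAt_const t w).dotProduct hg

end DotProduct

section PartialDerivatives

variable {n N : ℕ} (v : Fin N → Fin n → ℝ) (Q P : Fin n → ℝ) (k : Fin n)

theorem hasDerivAt_expHam_update_p :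
    HasDerivAt (fun x => expHam n N v Q (update P k x)) (P k) (P k) := by
  have hP := hasDerivAt_update P k (P k)
  have h := ((hP.dotProduct hP).const_mul (1 / 2 : ℝ)).add_const
    (∑ i, Real.exp (v i ⬝ᵥ Q))
  refine h.congr_deriv ?_
  simp only [update_eq_self, single_dotProduct, dotProduct_single]
  ring

theorem hasDerivAt_expHam_update_q :
    HasDerivAt (fun x => expHam n N v (update Q k x) P)
      (∑ i, Real.exp (v i ⬝ᵥ Q) * v i k) (Q k) := by
  have hQ := hasDerivAt_update Q k (Q k)
  have h := (HasDerivAt.fun_sum (u := Finset.univ) fun i _ =>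
    (hQ.const_dotProduct (v i)).exp).const_add ((1 / 2 : ℝ) * (P ⬝ᵥ P))
  refine h.congr_deriv ?_
  simp only [update_eq_self, dotProduct_single, mul_one]

end PartialDerivatives

/-- If `(q(t), p(t))` solves Hamilton's equations for
`H(q,p) = ½⟨p,p⟩ + Σ_i exp(⟨v_i,q⟩)`, then `a_i = −exp(⟨v_i,q⟩)`, `b_i = ⟨v_i,p⟩`
satisfy `ȧ_k = a_k b_k`, `ḃ_k = Σ_i M_{ki} a_i` with `M_{ki} = ⟨v_k, v_i⟩`. -/
theorem flaschka_transform (n N : ℕ) (v : Fin N → Fin n → ℝ)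
    (q p : ℝ → Fin n → ℝ)
    (hq : ∀ (t : ℝ) (k : Fin n), HasDerivAt (fun s => q s k)
      (deriv (fun x => expHam n N v (q t) (Function.update (p t) k x)) (p t k)) t)
    (hp : ∀ (t : ℝ) (k : Fin n), HasDerivAt (fun s => p s k)
      (-(deriv (fun x => expHam n N v (Function.update (q t) k x) (p t)) (q t k))) t) :
    ∀ (t : ℝ) (k : Fin N),
      HasDerivAt (fun s => -Real.exp (∑ j, v k j * q s j))
        ((-Real.exp (∑ j, v k j * q t j)) * (∑ j, v k j * p t j)) t ∧
      HasDerivAt (fun s => ∑ j, v k j * p s j)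
        (∑ i, (∑ j, v k j * v i j) * (-Real.exp (∑ j, v i j * q t j))) t := by
  change ∀ t k, HasDerivAt (fun s => -Real.exp (v k ⬝ᵥ q s))
      (-Real.exp (v k ⬝ᵥ q t) * (v k ⬝ᵥ p t)) t ∧
    HasDerivAt (fun s => v k ⬝ᵥ p s) (∑ i, (v k ⬝ᵥ v i) * -Real.exp (v i ⬝ᵥ q t)) t
  intro t k
  have hq' : HasDerivAt q (p t) t := hasDerivAt_pi.2 fun m => by
    simpa only [(hasDerivAt_expHam_update_p v (q t) (p t) m).deriv] using hq t m
  have hp' : HasDerivAt p (-∑ i, Real.exp (v i ⬝ᵥ q t) • v i) t := hasDerivAt_pi.2 fun m => by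
    simpa only [(hasDerivAt_expHam_update_q v (q t) (p t) m).deriv, Pi.neg_apply,
      Finset.sum_apply, Pi.smul_apply, smul_eq_mul] using hp t m
  refine ⟨?_, ?_⟩
  · exact (hq'.const_dotProduct (v k)).exp.neg.congr_deriv (neg_mul _ _).symm
  · refine (hp'.const_dotProduct (v k)).congr_deriv ?_
    simp only [dotProduct_neg, dotProduct_sum, dotProduct_smul, smul_eq_mul, mul_neg,
      Finset.sum_neg_distrib, mul_comm]
end

section
/- Let v_1, …, v_N ∈ ℝ^n and let (a(t), b(t)) be a differentiable solution of the system ȧ_k = a_k b_k, ḃ_k = Σ_{i=1}^N M_{ki} a_i (k = 1, …, N), where M_{ki} = ⟨v_k, v_i⟩, with a_i(t) > 0 for all t and i. If λ_1, …, λ_N ∈ ℝ satisfy Σ_{i=1}^N λ_i v_i = 0, then the function F_2(t) = Π_{i=1}^N a_i(t)^{λ_i} satisfies F_2'(t) = F_1(t)·F_2(t) where F_1(t) = Σ_i λ_i b_i(t); in particular, if F_1(0) = 0 then F_2 is constant in t. -/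
/-!
Logarithmic differentiation gives `F₂'/F₂ = Σᵢ λᵢ ȧᵢ/aᵢ = Σᵢ λᵢ bᵢ = F₁`. Moreover
`F₁' = Σₖ λₖ Σᵢ ⟨vₖ, vᵢ⟩ aᵢ = Σᵢ ⟨Σₖ λₖ vₖ, vᵢ⟩ aᵢ = 0`, so `F₁` is constant; if it vanishes at `0`
it vanishes everywhere, and then `F₂' = 0`.
-/

open Finset Matrix

theorem sum_mul_gram_mul_eq_zero {R ι κ : Type*} [CommSemiring R] [Fintype ι] [Fintype κ]
    (v : ι → κ → R) (c x : ι → R) (hc : ∀ j, ∑ i, c i * v i j = 0) :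
    ∑ k, c k * ∑ i, (∑ j, v k j * v i j) * x i = 0 := by
  have hcv : c ᵥ* Matrix.of v = 0 := funext hc
  change c ⬝ᵥ ((Matrix.of v * (Matrix.of v)ᵀ) *ᵥ x) = 0
  rw [dotProduct_mulVec, ← vecMul_vecMul, hcv, zero_vecMul, zero_dotProduct]

theorem hasDerivAt_prod_rpow_of_hasDerivAt_mul {ι : Type*} [Fintype ι] (f : ℝ → ι → ℝ)
    (g p : ι → ℝ) {t : ℝ} (hf : ∀ i, HasDerivAt (fun s => f s i) (f t i * g i) t)
    (hne : ∀ i, f t i ≠ 0) :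
    HasDerivAt (fun s => ∏ i, f s i ^ p i) ((∑ i, p i * g i) * ∏ i, f t i ^ p i) t := by
  classical
  have hfactor : ∀ i, HasDerivAt (fun s => f s i ^ p i) (p i * g i * f t i ^ p i) t := by
    intro i
    convert (hf i).rpow_const (p := p i) (Or.inl (hne i)) using 1
    rw [Real.rpow_sub_one (hne i)]
    field_simp [hne i]
  refine (HasDerivAt.fun_finsetProd (u := univ) fun i _ => hfactor i).congr_deriv ?_
  rw [sum_mul]
  refine sum_congr rfl fun i _ => ?_
  rw [smul_eq_mul, mul_comm, mul_assoc, mul_prod_erase univ (fun j => f t j ^ p j) (mem_univ i)]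

theorem is_const_of_forall_hasDerivAt_zero {𝕜 G : Type*} [RCLike 𝕜] [NormedAddCommGroup G]
    [NormedSpace 𝕜 G] {f : 𝕜 → G} (hf : ∀ x, HasDerivAt f 0 x) (x y : 𝕜) : f x = f y :=
  is_const_of_deriv_eq_zero (fun z => (hf z).differentiableAt) (fun z => (hf z).deriv) x y

/-- If `(a(t), b(t))` solves `ȧ_k = a_k b_k`, `ḃ_k = Σ_i M_{ki} a_i`
with `M_{ki} = ⟨v_k, v_i⟩`, all `a_i(t) > 0`, and `Σ_i λ_i v_i = 0`, then
`F_2(t) = Π_i a_i(t)^{λ_i}` satisfies `F_2' = F_1·F_2` where `F_1 = Σ_i λ_i b_i`;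
in particular, if `F_1(0) = 0` then `F_2` is constant. -/
theorem F2_is_integral (n N : ℕ) (v : Fin N → Fin n → ℝ)
    (a b : ℝ → Fin N → ℝ)
    (ha : ∀ (t : ℝ) (k : Fin N), HasDerivAt (fun s => a s k) (a t k * b t k) t)
    (hb : ∀ (t : ℝ) (k : Fin N), HasDerivAt (fun s => b s k)
      (∑ i, (∑ j, v k j * v i j) * a t i) t)
    (hpos : ∀ (t : ℝ) (i : Fin N), 0 < a t i)
    (lam : Fin N → ℝ)
    (hlam : ∀ j : Fin n, ∑ i, lam i * v i j = 0) :
    (∀ t : ℝ, HasDerivAt (fun s => ∏ i, Real.rpow (a s i) (lam i))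
      ((∑ i, lam i * b t i) * ∏ i, Real.rpow (a t i) (lam i)) t) ∧
    ((∑ i, lam i * b 0 i) = 0 →
      ∀ t : ℝ, ∏ i, Real.rpow (a t i) (lam i) = ∏ i, Real.rpow (a 0 i) (lam i)) := by
  have hF₂ : ∀ t, HasDerivAt (fun s => ∏ i, a s i ^ lam i)
      ((∑ i, lam i * b t i) * ∏ i, a t i ^ lam i) t := fun t =>
    hasDerivAt_prod_rpow_of_hasDerivAt_mul a (b t) lam (ha t) fun i => (hpos t i).ne'
  refine ⟨hF₂, fun hF₁₀ => ?_⟩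
  have hF₁ : ∀ t, HasDerivAt (fun s => ∑ i, lam i * b s i) 0 t := fun t => by
    simpa only [sum_mul_gram_mul_eq_zero v lam (a t) hlam] using
      HasDerivAt.fun_sum (u := univ) fun k _ => (hb t k).const_mul (lam k)
  have hF₁_zero : ∀ t, ∑ i, lam i * b t i = 0 := fun t =>
    (is_const_of_forall_hasDerivAt_zero hF₁ t 0).trans hF₁₀
  have hF₂' : ∀ t, HasDerivAt (fun s => ∏ i, a s i ^ lam i) 0 t := fun t => by
    simpa only [hF₁_zero t, zero_mul] using hF₂ t
  exact fun t => is_const_of_forall_hasDerivAt_zero hF₂' t 0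
end

section
/- Let n ≥ 4 and let (a(t), b(t)) be a differentiable solution of the D_n Toda equations. Then for every positive integer i the function H_{2i}(t) = (1/2i)·Tr(L(t)^{2i}) is constant in t, and det L(t) is constant in t, where L is the symmetric 2n×2n matrix with diagonal (b_1, …, b_n, −b_n, …, −b_1), superdiagonal entries L_{i,i+1} = a_i for i = 1, …, n−1, L_{n,n+1} = 0, L_{n+j,n+j+1} = −a_{n−j} for j = 1, …, n−1, additional entries L_{n−1,n+1} = L_{n+1,n−1} = −a_n and L_{n,n+2} = L_{n+2,n} = a_n, and all other entries zero. -/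
set_option linter.unusedSectionVars false

/-- The symmetric `2n×2n` Lax matrix `L` of the `D_n` Toda lattice (written with 1-based
indices `i' = i+1, j' = j+1`): diagonal `(b_1, …, b_n, −b_n, …, −b_1)`, superdiagonal
entries `L_{i,i+1} = a_i` for `i = 1, …, n−1`, `L_{n,n+1} = 0`,
`L_{n+j,n+j+1} = −a_{n−j}` for `j = 1, …, n−1`, additional entries
`L_{n−1,n+1} = L_{n+1,n−1} = −a_n` and `L_{n,n+2} = L_{n+2,n} = a_n`,
symmetric completion, and all other entries zero. -/
def DnLax (n : ℕ) (a b : ℕ → ℝ) : Matrix (Fin (2 * n)) (Fin (2 * n)) ℝ :=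
  Matrix.of fun i j =>
    let i' := (i : ℕ) + 1
    let j' := (j : ℕ) + 1
    if i' = j' then (if i' ≤ n then b i' else -b (2 * n + 1 - i'))
    else if j' = i' + 1 then
      (if i' ≤ n - 1 then a i' else if i' = n then 0 else -a (2 * n - i'))
    else if i' = j' + 1 then
      (if j' ≤ n - 1 then a j' else if j' = n then 0 else -a (2 * n - j'))
    else if i' = n - 1 ∧ j' = n + 1 then -a n
    else if i' = n + 1 ∧ j' = n - 1 then -a n
    else if i' = n ∧ j' = n + 2 then a n
    else if i' = n + 2 ∧ j' = n then a n
    else 0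

noncomputable section DnAux

/-- The `D_n` Lax-matrix entry function over `ℤ` indices (1-based), with
coefficient functions `f` (for `a`) and `g` (for `b`). -/
def Ent (n : ℕ) (f g : ℤ → ℝ) (p q : ℤ) : ℝ :=
  if p = q then (if p ≤ (n:ℤ) then g p else -g (2*n+1-p))
  else if q = p+1 then (if p ≤ (n:ℤ)-1 then f p else if p = (n:ℤ) then 0 else -f (2*n-p))
  else if p = q+1 then (if q ≤ (n:ℤ)-1 then f q else if q = (n:ℤ) then 0 else -f (2*n-q))
  else if p = (n:ℤ)-1 ∧ q = (n:ℤ)+1 then -f n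
  else if p = (n:ℤ)+1 ∧ q = (n:ℤ)-1 then -f n
  else if p = (n:ℤ) ∧ q = (n:ℤ)+2 then f n
  else if p = (n:ℤ)+2 ∧ q = (n:ℤ) then f n
  else 0

/-- Skew (Lax `B`) entry function. -/
def Bnt (n : ℕ) (f g : ℤ → ℝ) (p q : ℤ) : ℝ :=
  if p < q then Ent n f g p q else if q < p then -Ent n f g p q else 0

/-- derivative coefficient for `a`. -/
def fd (n : ℕ) (f g : ℤ → ℝ) (p : ℤ) : ℝ :=
  if p = (n:ℤ) then -(f n * (g ((n:ℤ)-1) + g n)) else f p * (g (p+1) - g p)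

/-- derivative coefficient for `b`. -/
def gd (n : ℕ) (f : ℤ → ℝ) (p : ℤ) : ℝ :=
  if p = (n:ℤ)-1 then 2*(f n^2 + f ((n:ℤ)-1)^2 - f ((n:ℤ)-2)^2)
  else 2*(f p^2 - f (p-1)^2)

variable {n : ℕ} (f g : ℤ → ℝ)

set_option maxHeartbeats 1000000 in
lemma entSymm (p q : ℤ) : Ent n f g p q = Ent n f g q p := by
  unfold Ent; split_ifs <;> first | rfl | omega | (subst_vars; rfl)

lemma entDiag {p q : ℤ} (h : p = q) (h2 : p ≤ (n:ℤ)) : Ent n f g p q = g p := by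
  subst h; unfold Ent; rw [if_pos rfl, if_pos h2]

lemma entDiagH {p q : ℤ} (h : p = q) (h2 : (n:ℤ)+1 ≤ p) :
    Ent n f g p q = -g (2*n+1-p) := by
  subst h; unfold Ent; rw [if_pos rfl, if_neg (by omega)]

lemma entSup {p q : ℤ} (h : q = p+1) (h2 : p ≤ (n:ℤ)-1) : Ent n f g p q = f p := by
  subst h; unfold Ent; rw [if_neg (by omega), if_pos rfl, if_pos h2]

lemma entSupN {p q : ℤ} (h : p = (n:ℤ)) (h' : q = p+1) : Ent n f g p q = 0 := by
  subst h'; subst h; unfold Ent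
  rw [if_neg (by omega), if_pos rfl, if_neg (by omega), if_pos rfl]

lemma entSupH {p q : ℤ} (h : q = p+1) (h2 : (n:ℤ)+1 ≤ p) :
    Ent n f g p q = -f (2*n-p) := by
  subst h; unfold Ent
  rw [if_neg (by omega), if_pos rfl, if_neg (by omega), if_neg (by omega)]

lemma entSub {p q : ℤ} (h : p = q+1) (h2 : q ≤ (n:ℤ)-1) : Ent n f g p q = f q := by
  subst h; unfold Ent
  rw [if_neg (by omega), if_neg (by omega), if_pos rfl, if_pos h2]

lemma entSubN {p q : ℤ} (h : q = (n:ℤ)) (h' : p = q+1) : Ent n f g p q = 0 := by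
  subst h'; subst h; unfold Ent
  rw [if_neg (by omega), if_neg (by omega), if_pos rfl, if_neg (by omega), if_pos rfl]

lemma entSubH {p q : ℤ} (h : p = q+1) (h2 : (n:ℤ)+1 ≤ q) :
    Ent n f g p q = -f (2*n-q) := by
  subst h; unfold Ent
  rw [if_neg (by omega), if_neg (by omega), if_pos rfl, if_neg (by omega), if_neg (by omega)]

lemma entSk1 {p q : ℤ} (h : p = (n:ℤ)-1) (h' : q = (n:ℤ)+1) : Ent n f g p q = -f n := by
  subst h; subst h'; unfold Ent
  rw [if_neg (by omega), if_neg (by omega), if_neg (by omega), if_pos ⟨rfl, rfl⟩]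

lemma entSk1' {p q : ℤ} (h : p = (n:ℤ)+1) (h' : q = (n:ℤ)-1) : Ent n f g p q = -f n := by
  subst h; subst h'; unfold Ent
  rw [if_neg (by omega), if_neg (by omega), if_neg (by omega), if_neg (by omega),
    if_pos ⟨rfl, rfl⟩]

lemma entSk2 {p q : ℤ} (h : p = (n:ℤ)) (h' : q = (n:ℤ)+2) : Ent n f g p q = f n := by
  subst h; subst h'; unfold Ent
  rw [if_neg (by omega), if_neg (by omega), if_neg (by omega), if_neg (by omega),
    if_neg (by omega), if_pos ⟨rfl, rfl⟩]

lemma entSk2' {p q : ℤ} (h : p = (n:ℤ)+2) (h' : q = (n:ℤ)) : Ent n f g p q = f n := by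
  subst h; subst h'; unfold Ent
  rw [if_neg (by omega), if_neg (by omega), if_neg (by omega), if_neg (by omega),
    if_neg (by omega), if_neg (by omega), if_pos ⟨rfl, rfl⟩]

lemma entD2 {p q : ℤ} (h : q = p+2) (h1 : p ≠ (n:ℤ)-1) (h2 : p ≠ (n:ℤ)) :
    Ent n f g p q = 0 := by
  subst h; unfold Ent; split_ifs <;> first | rfl | omega

lemma entD2' {p q : ℤ} (h : p = q+2) (h1 : q ≠ (n:ℤ)-1) (h2 : q ≠ (n:ℤ)) :
    Ent n f g p q = 0 := by
  subst h; unfold Ent; split_ifs <;> first | rfl | omega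

lemma entFar {p q : ℤ} (h : p + 3 ≤ q ∨ q + 3 ≤ p) : Ent n f g p q = 0 := by
  unfold Ent; split_ifs <;> first | rfl | omega

lemma entOut (hn : 4 ≤ n) (hf0 : f 0 = 0) {p q : ℤ} (h : p ≤ 0 ∨ 2*(n:ℤ)+1 ≤ p)
    (hq1 : 1 ≤ q) (hq2 : q ≤ 2*(n:ℤ)) : Ent n f g p q = 0 := by
  unfold Ent
  split_ifs <;>
    first
    | rfl
    | omega
    | (rw [show p = (0:ℤ) by omega, hf0])
    | (rw [show 2*(n:ℤ)-q = 0 by omega, hf0]; ring)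

lemma bntLT {p q : ℤ} (h : p < q) : Bnt n f g p q = Ent n f g p q := if_pos h

lemma bntGT {p q : ℤ} (h : q < p) : Bnt n f g p q = -Ent n f g p q := by
  unfold Bnt; rw [if_neg (by omega), if_pos h]

lemma bntEQ {p q : ℤ} (h : p = q) : Bnt n f g p q = 0 := by
  unfold Bnt; rw [if_neg (by omega), if_neg (by omega)]

lemma gdLow {p : ℤ} (h : p ≠ (n:ℤ)-1) : gd n f p = 2*(f p^2 - f (p-1)^2) := if_neg h
lemma gdN1 {p : ℤ} (h : p = (n:ℤ)-1) :
    gd n f p = 2*(f n^2 + f ((n:ℤ)-1)^2 - f ((n:ℤ)-2)^2) := by subst h; exact if_pos rfl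
lemma fdLow {p : ℤ} (h : p ≠ (n:ℤ)) : fd n f g p = f p * (g (p+1) - g p) := if_neg h
lemma fdN {p : ℤ} (h : p = (n:ℤ)) :
    fd n f g p = -(f n * (g ((n:ℤ)-1) + g n)) := by subst h; exact if_pos rfl

variable (hn : 4 ≤ n)

lemma bntSymm (p q : ℤ) : Bnt n f g q p = -Bnt n f g p q := by
  rcases lt_trichotomy p q with h | h | h
  · rw [bntGT f g h, bntLT f g h, entSymm f g q p]
  · rw [bntEQ f g h.symm, bntEQ f g h, neg_zero]
  · rw [bntLT f g h, bntGT f g h, entSymm f g q p, neg_neg]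

lemma sum_range_to_Icc (F : ℤ → ℝ) (N : ℕ) :
    ∑ k ∈ Finset.range N, F ((k : ℤ) + 1) = ∑ m ∈ Finset.Icc (1 : ℤ) N, F m := by
  induction N with
  | zero => simp
  | succ N ih =>
    rw [Finset.sum_range_succ, ih, show ((N:ℤ)+1 : ℤ) = ((N+1 : ℕ) : ℤ) by push_cast; ring]
    rw [show Finset.Icc (1:ℤ) ((N+1:ℕ):ℤ) = insert ((N+1:ℕ):ℤ) (Finset.Icc (1:ℤ) (N:ℤ)) from by
      ext m; simp [Finset.mem_Icc]; omega]
    rw [Finset.sum_insert (by simp [Finset.mem_Icc])]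
    push_cast; ring

lemma sum_five (F : ℤ → ℝ) (p : ℤ) :
    ∑ m ∈ Finset.Icc (p-2) (p+2), F m = F (p-2) + F (p-1) + F p + F (p+1) + F (p+2) := by
  rw [show Finset.Icc (p-2) (p+2) = {p-2, p-1, p, p+1, p+2} from by
    ext m; simp [Finset.mem_Icc, Finset.mem_insert]; omega]
  rw [Finset.sum_insert (by simp only [Finset.mem_insert, Finset.mem_singleton]; omega), Finset.sum_insert (by simp only [Finset.mem_insert, Finset.mem_singleton]; omega),
    Finset.sum_insert (by simp only [Finset.mem_insert, Finset.mem_singleton]; omega), Finset.sum_insert (by simp only [Finset.mem_insert, Finset.mem_singleton]; omega),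
    Finset.sum_singleton]
  ring

include hn in
lemma window (hf0 : f 0 = 0) {p q : ℤ} (hp1 : 1 ≤ p) (hp2 : p ≤ 2*(n:ℤ))
    (hq1 : 1 ≤ q) (hq2 : q ≤ 2*(n:ℤ)) :
    ∑ k ∈ Finset.range (2*n),
      (Bnt n f g p ((k:ℤ)+1) * Ent n f g ((k:ℤ)+1) q
        - Ent n f g p ((k:ℤ)+1) * Bnt n f g ((k:ℤ)+1) q)
    = ∑ m ∈ Finset.Icc (p-2) (p+2),
      (Bnt n f g p m * Ent n f g m q - Ent n f g p m * Bnt n f g m q) := by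
  set F : ℤ → ℝ := fun m => Bnt n f g p m * Ent n f g m q - Ent n f g p m * Bnt n f g m q with hF
  have hzero : ∀ m : ℤ, m < p - 2 ∨ p + 2 < m → F m = 0 := by
    intro m hm
    have h1 : Ent n f g p m = 0 := entFar f g (by omega)
    have h2 : Bnt n f g p m = 0 := by
      unfold Bnt; split_ifs <;> simp [h1]
    simp [hF, h1, h2]
  have hout : ∀ m : ℤ, m ≤ 0 ∨ 2*(n:ℤ)+1 ≤ m → F m = 0 := by
    intro m hm
    have h1 : Ent n f g m q = 0 := entOut f g hn hf0 hm hq1 hq2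
    have h2 : Bnt n f g m q = 0 := by
      unfold Bnt; split_ifs <;> simp [h1]
    simp [hF, h1, h2]
  show (∑ k ∈ Finset.range (2*n), F ((k:ℤ)+1)) = _
  rw [sum_range_to_Icc F (2*n), show ((2*n : ℕ) : ℤ) = (2*(n:ℤ)) from by push_cast; ring]
  have e1 : ∑ m ∈ Finset.Icc (1:ℤ) (2*(n:ℤ)), F m
      = ∑ m ∈ Finset.Icc (1:ℤ) (2*(n:ℤ)) ∩ Finset.Icc (p-2) (p+2), F m := by
    refine (Finset.sum_subset Finset.inter_subset_left ?_).symm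
    intro m hm hm2
    simp only [Finset.mem_Icc, Finset.mem_inter, not_and] at hm hm2
    exact hzero m (by omega)
  have e2 : ∑ m ∈ Finset.Icc (p-2) (p+2), F m
      = ∑ m ∈ Finset.Icc (1:ℤ) (2*(n:ℤ)) ∩ Finset.Icc (p-2) (p+2), F m := by
    refine (Finset.sum_subset Finset.inter_subset_right ?_).symm
    intro m hm hm2
    simp only [Finset.mem_Icc, Finset.mem_inter, not_and] at hm hm2
    exact hout m (by omega)
  rw [e1, ← e2]

include hn in
lemma expand0 (hf0 : f 0 = 0) {p : ℤ} (hp1 : 1 ≤ p) (hp2 : p ≤ 2*(n:ℤ)) :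
    ∑ k ∈ Finset.range (2*n),
      (Bnt n f g p ((k:ℤ)+1) * Ent n f g ((k:ℤ)+1) p
        - Ent n f g p ((k:ℤ)+1) * Bnt n f g ((k:ℤ)+1) p)
    = 2*(Ent n f g p (p+1))^2 + 2*(Ent n f g p (p+2))^2
      - 2*(Ent n f g p (p-1))^2 - 2*(Ent n f g p (p-2))^2 := by
  rw [window f g hn hf0 hp1 hp2 hp1 hp2, sum_five,
    bntGT f g (show (p-2:ℤ) < p by omega), bntLT f g (show (p-2:ℤ) < p by omega),
    bntGT f g (show (p-1:ℤ) < p by omega), bntLT f g (show (p-1:ℤ) < p by omega),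
    bntEQ f g (rfl : (p:ℤ) = p),
    bntLT f g (show (p:ℤ) < p+1 by omega), bntGT f g (show (p:ℤ) < p+1 by omega),
    bntLT f g (show (p:ℤ) < p+2 by omega), bntGT f g (show (p:ℤ) < p+2 by omega),
    entSymm f g (p-2) p, entSymm f g (p-1) p, entSymm f g (p+1) p, entSymm f g (p+2) p]
  ring

include hn in
lemma expand1 (hf0 : f 0 = 0) {p : ℤ} (hp1 : 1 ≤ p) (hp2 : p + 1 ≤ 2*(n:ℤ)) :
    ∑ k ∈ Finset.range (2*n),
      (Bnt n f g p ((k:ℤ)+1) * Ent n f g ((k:ℤ)+1) (p+1)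
        - Ent n f g p ((k:ℤ)+1) * Bnt n f g ((k:ℤ)+1) (p+1))
    = Ent n f g p (p+1) * (Ent n f g (p+1) (p+1) - Ent n f g p p)
      - 2*(Ent n f g p (p-1) * Ent n f g (p-1) (p+1))
      + 2*(Ent n f g p (p+2) * Ent n f g (p+1) (p+2)) := by
  rw [window f g hn hf0 hp1 (by omega) (by omega) hp2, sum_five,
    bntGT f g (show (p-2:ℤ) < p by omega), bntLT f g (show (p-2:ℤ) < p+1 by omega),
    bntGT f g (show (p-1:ℤ) < p by omega), bntLT f g (show (p-1:ℤ) < p+1 by omega),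
    bntEQ f g (rfl : (p:ℤ) = p),
    bntLT f g (show (p:ℤ) < p+1 by omega), bntEQ f g (rfl : (p+1:ℤ) = p+1),
    bntLT f g (show (p:ℤ) < p+2 by omega), bntGT f g (show (p+1:ℤ) < p+2 by omega),
    entFar f g (p := p-2) (q := p+1) (by omega),
    entSymm f g (p+2) (p+1)]
  ring

include hn in
lemma expand2 (hf0 : f 0 = 0) {p : ℤ} (hp1 : 1 ≤ p) (hp2 : p + 2 ≤ 2*(n:ℤ)) :
    ∑ k ∈ Finset.range (2*n),
      (Bnt n f g p ((k:ℤ)+1) * Ent n f g ((k:ℤ)+1) (p+2)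
        - Ent n f g p ((k:ℤ)+1) * Bnt n f g ((k:ℤ)+1) (p+2))
    = Ent n f g p (p+2) * (Ent n f g (p+2) (p+2) - Ent n f g p p) := by
  rw [window f g hn hf0 hp1 (by omega) (by omega) hp2, sum_five,
    bntGT f g (show (p-2:ℤ) < p by omega), bntLT f g (show (p-2:ℤ) < p+2 by omega),
    bntGT f g (show (p-1:ℤ) < p by omega), bntLT f g (show (p-1:ℤ) < p+2 by omega),
    bntEQ f g (rfl : (p:ℤ) = p),
    bntLT f g (show (p:ℤ) < p+2 by omega),
    bntLT f g (show (p:ℤ) < p+1 by omega), bntLT f g (show (p+1:ℤ) < p+2 by omega),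
    bntEQ f g (rfl : (p+2:ℤ) = p+2),
    entFar f g (p := p-2) (q := p+2) (by omega),
    entFar f g (p := p-1) (q := p+2) (by omega)]
  ring

include hn in
lemma expand3 (hf0 : f 0 = 0) {p q : ℤ} (hp1 : 1 ≤ p) (hq2 : q ≤ 2*(n:ℤ)) (hd : p + 3 ≤ q) :
    ∑ k ∈ Finset.range (2*n),
      (Bnt n f g p ((k:ℤ)+1) * Ent n f g ((k:ℤ)+1) q
        - Ent n f g p ((k:ℤ)+1) * Bnt n f g ((k:ℤ)+1) q)
    = 0 := by
  rw [window f g hn hf0 hp1 (by omega) (by omega) hq2, sum_five,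
    bntGT f g (show (p-2:ℤ) < p by omega), bntLT f g (show (p-2:ℤ) < q by omega),
    bntGT f g (show (p-1:ℤ) < p by omega), bntLT f g (show (p-1:ℤ) < q by omega),
    bntEQ f g (rfl : (p:ℤ) = p),
    bntLT f g (show (p:ℤ) < q by omega),
    bntLT f g (show (p:ℤ) < p+1 by omega), bntLT f g (show (p+1:ℤ) < q by omega),
    bntLT f g (show (p:ℤ) < p+2 by omega), bntLT f g (show (p+2:ℤ) < q by omega),
    entFar f g (p := p) (q := q) (by omega),
    entFar f g (p := p-2) (q := q) (by omega),
    entFar f g (p := p-1) (q := q) (by omega)]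
  ring


include hn in
lemma sumF_core (hf0 : f 0 = 0) {p q : ℤ} (hp1 : 1 ≤ p) (hp2 : p ≤ 2*(n:ℤ))
    (hq1 : 1 ≤ q) (hq2 : q ≤ 2*(n:ℤ)) (hpq : p ≤ q) :
    ∑ k ∈ Finset.range (2*n),
      (Bnt n f g p ((k:ℤ)+1) * Ent n f g ((k:ℤ)+1) q
        - Ent n f g p ((k:ℤ)+1) * Bnt n f g ((k:ℤ)+1) q)
    = Ent n (fd n f g) (gd n f) p q := by
  have hd : q = p ∨ q = p+1 ∨ q = p+2 ∨ p+3 ≤ q := by omega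
  rcases hd with hd | hd | hd | hd
  · -- diagonal
    subst q
    rw [expand0 f g hn hf0 hp1 hp2]
    have hz : p ≤ (n:ℤ)-2 ∨ p = (n:ℤ)-1 ∨ p = (n:ℤ) ∨ p = (n:ℤ)+1 ∨ p = (n:ℤ)+2
        ∨ (n:ℤ)+3 ≤ p := by omega
    rcases hz with hz | hz | hz | hz | hz | hz
    · rw [entSup f g (p := p) (q := p+1) rfl (by omega),
        entD2 f g (p := p) (q := p+2) rfl (by omega) (by omega),
        entSub f g (p := p) (q := p-1) (by ring) (by omega),
        entD2' f g (p := p) (q := p-2) (by ring) (by omega) (by omega),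
        entDiag (fd n f g) (gd n f) (p := p) (q := p) rfl (by omega),
        gdLow f (by omega)]
      ring
    · subst hz
      rw [entSup f g (p := (n:ℤ)-1) (q := ((n:ℤ)-1)+1) rfl (by omega),
        entSk1 f g (p := (n:ℤ)-1) (q := ((n:ℤ)-1)+2) rfl (by ring),
        entSub f g (p := (n:ℤ)-1) (q := ((n:ℤ)-1)-1) (by ring) (by omega),
        entD2' f g (p := (n:ℤ)-1) (q := ((n:ℤ)-1)-2) (by ring) (by omega) (by omega),
        entDiag (fd n f g) (gd n f) (p := (n:ℤ)-1) (q := (n:ℤ)-1) rfl (by omega),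
        gdN1 f rfl, show ((n:ℤ)-1)-1 = (n:ℤ)-2 by ring]
      ring
    · subst hz
      rw [entSupN f g (p := (n:ℤ)) (q := (n:ℤ)+1) rfl rfl,
        entSk2 f g (p := (n:ℤ)) (q := (n:ℤ)+2) rfl rfl,
        entSub f g (p := (n:ℤ)) (q := (n:ℤ)-1) (by ring) (by omega),
        entD2' f g (p := (n:ℤ)) (q := (n:ℤ)-2) (by ring) (by omega) (by omega),
        entDiag (fd n f g) (gd n f) (p := (n:ℤ)) (q := (n:ℤ)) rfl (by omega),
        gdLow f (by omega)]
      ring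
    · subst hz
      rw [entSupH f g (p := (n:ℤ)+1) (q := ((n:ℤ)+1)+1) rfl (by omega),
        entD2 f g (p := (n:ℤ)+1) (q := ((n:ℤ)+1)+2) rfl (by omega) (by omega),
        entSubN f g (p := (n:ℤ)+1) (q := ((n:ℤ)+1)-1) (by ring) (by ring),
        entSk1' f g (p := (n:ℤ)+1) (q := ((n:ℤ)+1)-2) rfl (by ring),
        entDiagH (fd n f g) (gd n f) (p := (n:ℤ)+1) (q := (n:ℤ)+1) rfl (by omega),
        show 2*(n:ℤ)+1-((n:ℤ)+1) = (n:ℤ) by ring,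
        show 2*(n:ℤ)-((n:ℤ)+1) = (n:ℤ)-1 by ring,
        gdLow f (by omega)]
      ring
    · subst hz
      rw [entSupH f g (p := (n:ℤ)+2) (q := ((n:ℤ)+2)+1) rfl (by omega),
        entD2 f g (p := (n:ℤ)+2) (q := ((n:ℤ)+2)+2) rfl (by omega) (by omega),
        entSubH f g (p := (n:ℤ)+2) (q := ((n:ℤ)+2)-1) (by ring) (by omega),
        entSk2' f g (p := (n:ℤ)+2) (q := ((n:ℤ)+2)-2) rfl (by ring),
        entDiagH (fd n f g) (gd n f) (p := (n:ℤ)+2) (q := (n:ℤ)+2) rfl (by omega),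
        show 2*(n:ℤ)+1-((n:ℤ)+2) = (n:ℤ)-1 by ring,
        show 2*(n:ℤ)-((n:ℤ)+2) = (n:ℤ)-2 by ring,
        show 2*(n:ℤ)-(((n:ℤ)+2)-1) = (n:ℤ)-1 by ring,
        gdN1 f rfl]
      ring
    · rw [entSupH f g (p := p) (q := p+1) rfl (by omega),
        entD2 f g (p := p) (q := p+2) rfl (by omega) (by omega),
        entSubH f g (p := p) (q := p-1) (by ring) (by omega),
        entD2' f g (p := p) (q := p-2) (by ring) (by omega) (by omega),
        entDiagH (fd n f g) (gd n f) (p := p) (q := p) rfl (by omega),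
        gdLow f (by omega),
        show 2*(n:ℤ)-(p-1) = 2*(n:ℤ)+1-p by ring,
        show 2*(n:ℤ)+1-p-1 = 2*(n:ℤ)-p by ring]
      ring
  · -- superdiagonal
    subst q
    rw [expand1 f g hn hf0 hp1 (by omega)]
    have hz : p ≤ (n:ℤ)-2 ∨ p = (n:ℤ)-1 ∨ p = (n:ℤ) ∨ p = (n:ℤ)+1 ∨ (n:ℤ)+2 ≤ p := by
      omega
    rcases hz with hz | hz | hz | hz | hz
    · rw [entSup f g (p := p) (q := p+1) rfl (by omega),
        entDiag f g (p := p+1) (q := p+1) rfl (by omega),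
        entDiag f g (p := p) (q := p) rfl (by omega),
        entD2 f g (p := p-1) (q := p+1) (by ring) (by omega) (by omega),
        entD2 f g (p := p) (q := p+2) rfl (by omega) (by omega),
        entSup (fd n f g) (gd n f) (p := p) (q := p+1) rfl (by omega),
        fdLow f g (by omega)]
      ring
    · subst hz
      rw [entSup f g (p := (n:ℤ)-1) (q := ((n:ℤ)-1)+1) rfl (by omega),
        entD2 f g (p := ((n:ℤ)-1)-1) (q := ((n:ℤ)-1)+1) (by ring) (by omega) (by omega),
        entSk1 f g (p := (n:ℤ)-1) (q := ((n:ℤ)-1)+2) rfl (by ring),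
        entSupN f g (p := ((n:ℤ)-1)+1) (q := ((n:ℤ)-1)+2) (by ring) (by ring),
        entDiag f g (p := ((n:ℤ)-1)+1) (q := ((n:ℤ)-1)+1) rfl (by omega),
        entDiag f g (p := (n:ℤ)-1) (q := (n:ℤ)-1) rfl (by omega),
        entSup (fd n f g) (gd n f) (p := (n:ℤ)-1) (q := ((n:ℤ)-1)+1) rfl (by omega),
        fdLow f g (by omega)]
      ring
    · subst hz
      rw [entSupN f g (p := (n:ℤ)) (q := (n:ℤ)+1) rfl rfl,
        entSub f g (p := (n:ℤ)) (q := (n:ℤ)-1) (by ring) (by omega),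
        entSk1 f g (p := (n:ℤ)-1) (q := (n:ℤ)+1) rfl rfl,
        entSk2 f g (p := (n:ℤ)) (q := (n:ℤ)+2) rfl rfl,
        entSupH f g (p := (n:ℤ)+1) (q := (n:ℤ)+2) (by ring) (by omega),
        entSupN (fd n f g) (gd n f) (p := (n:ℤ)) (q := (n:ℤ)+1) rfl rfl,
        show 2*(n:ℤ)-((n:ℤ)+1) = (n:ℤ)-1 by ring]
      ring
    · subst hz
      rw [entSupH f g (p := (n:ℤ)+1) (q := ((n:ℤ)+1)+1) rfl (by omega),
        entDiagH f g (p := ((n:ℤ)+1)+1) (q := ((n:ℤ)+1)+1) rfl (by omega),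
        entDiagH f g (p := (n:ℤ)+1) (q := (n:ℤ)+1) rfl (by omega),
        entSubN f g (p := (n:ℤ)+1) (q := ((n:ℤ)+1)-1) (by ring) (by ring),
        entD2 f g (p := (n:ℤ)+1) (q := ((n:ℤ)+1)+2) rfl (by omega) (by omega),
        entSupH (fd n f g) (gd n f) (p := (n:ℤ)+1) (q := ((n:ℤ)+1)+1) rfl (by omega),
        show 2*(n:ℤ)-((n:ℤ)+1) = (n:ℤ)-1 by ring,
        show 2*(n:ℤ)+1-(((n:ℤ)+1)+1) = (n:ℤ)-1 by ring,
        show 2*(n:ℤ)+1-((n:ℤ)+1) = (n:ℤ) by ring,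
        fdLow f g (by omega),
        show ((n:ℤ)-1)+1 = (n:ℤ) by ring]
      ring
    · rw [entSupH f g (p := p) (q := p+1) rfl (by omega),
        entDiagH f g (p := p+1) (q := p+1) rfl (by omega),
        entDiagH f g (p := p) (q := p) rfl (by omega),
        entSubH f g (p := p) (q := p-1) (by ring) (by omega),
        entD2 f g (p := p-1) (q := p+1) (by ring) (by omega) (by omega),
        entD2 f g (p := p) (q := p+2) rfl (by omega) (by omega),
        entSupH (fd n f g) (gd n f) (p := p) (q := p+1) rfl (by omega),
        fdLow f g (by omega),
        show 2*(n:ℤ)+1-(p+1) = 2*(n:ℤ)-p by ring,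
        show 2*(n:ℤ)-(p-1) = 2*(n:ℤ)+1-p by ring,
        show 2*(n:ℤ)-p+1 = 2*(n:ℤ)+1-p by ring]
      ring
  · -- distance two
    subst q
    rw [expand2 f g hn hf0 hp1 (by omega)]
    have hz : p = (n:ℤ)-1 ∨ p = (n:ℤ) ∨ (p ≠ (n:ℤ)-1 ∧ p ≠ (n:ℤ)) := by omega
    rcases hz with hz | hz | hz
    · subst hz
      rw [entSk1 f g (p := (n:ℤ)-1) (q := ((n:ℤ)-1)+2) rfl (by ring),
        entDiagH f g (p := ((n:ℤ)-1)+2) (q := ((n:ℤ)-1)+2) rfl (by omega),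
        entDiag f g (p := (n:ℤ)-1) (q := (n:ℤ)-1) rfl (by omega),
        entSk1 (fd n f g) (gd n f) (p := (n:ℤ)-1) (q := ((n:ℤ)-1)+2) rfl (by ring),
        fdN f g rfl,
        show 2*(n:ℤ)+1-(((n:ℤ)-1)+2) = (n:ℤ) by ring]
      ring
    · subst hz
      rw [entSk2 f g (p := (n:ℤ)) (q := (n:ℤ)+2) rfl rfl,
        entDiagH f g (p := (n:ℤ)+2) (q := (n:ℤ)+2) rfl (by omega),
        entDiag f g (p := (n:ℤ)) (q := (n:ℤ)) rfl (by omega),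
        entSk2 (fd n f g) (gd n f) (p := (n:ℤ)) (q := (n:ℤ)+2) rfl rfl,
        fdN f g rfl,
        show 2*(n:ℤ)+1-((n:ℤ)+2) = (n:ℤ)-1 by ring]
      ring
    · rw [entD2 f g (p := p) (q := p+2) rfl hz.1 hz.2,
        entD2 (fd n f g) (gd n f) (p := p) (q := p+2) rfl hz.1 hz.2]
      ring
  · -- distance at least three
    rw [expand3 f g hn hf0 hp1 hq2 hd, entFar (fd n f g) (gd n f) (Or.inl hd)]

include hn in
lemma sumF (hf0 : f 0 = 0) {p q : ℤ} (hp1 : 1 ≤ p) (hp2 : p ≤ 2*(n:ℤ))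
    (hq1 : 1 ≤ q) (hq2 : q ≤ 2*(n:ℤ)) :
    ∑ k ∈ Finset.range (2*n),
      (Bnt n f g p ((k:ℤ)+1) * Ent n f g ((k:ℤ)+1) q
        - Ent n f g p ((k:ℤ)+1) * Bnt n f g ((k:ℤ)+1) q)
    = Ent n (fd n f g) (gd n f) p q := by
  rcases le_or_gt p q with h | h
  · exact sumF_core f g hn hf0 hp1 hp2 hq1 hq2 h
  · have e : ∀ m : ℤ, Bnt n f g p m * Ent n f g m q - Ent n f g p m * Bnt n f g m q
        = Bnt n f g q m * Ent n f g m p - Ent n f g q m * Bnt n f g m p := by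
      intro m
      rw [bntSymm f g m q, entSymm f g m p, entSymm f g q m, bntSymm f g p m]
      ring
    simp only [e]
    rw [sumF_core f g hn hf0 hq1 hq2 hp1 hp2 (by omega), entSymm]


/-- ℕ-level derivative coefficient for `a`. -/
def adN (n : ℕ) (u v : ℕ → ℝ) (i : ℕ) : ℝ :=
  if i = n then -(u n * (v (n-1) + v n)) else u i * (v (i+1) - v i)

/-- ℕ-level derivative coefficient for `b`. -/
def bdN (n : ℕ) (u : ℕ → ℝ) (i : ℕ) : ℝ :=
  if i = n-1 then 2*(u n^2 + u (n-1)^2 - u (n-2)^2) else 2*(u i^2 - u (i-1)^2)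

set_option maxHeartbeats 2000000 in
lemma castEnt (hn : 4 ≤ n) (u v : ℕ → ℝ) (i j : Fin (2*n)) :
    DnLax n u v i j
      = Ent n (fun z => u z.toNat) (fun z => v z.toNat) (((i:ℕ):ℤ)+1) (((j:ℕ):ℤ)+1) := by
  have hi := i.isLt; have hj := j.isLt
  unfold DnLax Ent
  simp only [Matrix.of_apply]
  split_ifs <;>
    first
    | rfl
    | omega
    | (exfalso; omega)
    | (congr 1; omega)
    | (rw [neg_inj]; congr 1; omega)

lemma entCongr (hn : 4 ≤ n) (f g f' g' : ℤ → ℝ)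
    (hf : ∀ x : ℤ, 0 ≤ x → x ≤ n → f x = f' x)
    (hg : ∀ x : ℤ, 1 ≤ x → x ≤ n → g x = g' x)
    {p q : ℤ} (hp1 : 1 ≤ p) (hp2 : p ≤ 2*(n:ℤ)) (hq1 : 1 ≤ q) (hq2 : q ≤ 2*(n:ℤ)) :
    Ent n f g p q = Ent n f' g' p q := by
  unfold Ent
  split_ifs <;>
    first
    | rfl
    | (rw [hf _ (by omega) (by omega)])
    | (rw [hg _ (by omega) (by omega)])

/-- the Lax `B` matrix. -/
def BmatAux (n : ℕ) (u v : ℕ → ℝ) : Matrix (Fin (2*n)) (Fin (2*n)) ℝ :=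
  Matrix.of fun i j =>
    Bnt n (fun z => u z.toNat) (fun z => v z.toNat) (((i:ℕ):ℤ)+1) (((j:ℕ):ℤ)+1)

lemma commutatorAux (hn : 4 ≤ n) (u v : ℕ → ℝ) (hu0 : u 0 = 0) :
    BmatAux n u v * DnLax n u v - DnLax n u v * BmatAux n u v
      = DnLax n (adN n u v) (bdN n u) := by
  set f : ℤ → ℝ := fun z => u z.toNat with hfdef
  set g : ℤ → ℝ := fun z => v z.toNat with hgdef
  have hf0 : f 0 = 0 := hu0
  ext i j
  have hi := i.isLt; have hj := j.isLt
  simp only [Matrix.sub_apply, Matrix.mul_apply, BmatAux, Matrix.of_apply]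
  simp only [castEnt hn u v]
  rw [← Finset.sum_sub_distrib]
  rw [Fin.sum_univ_eq_sum_range (fun k : ℕ =>
    Bnt n f g (((i:ℕ):ℤ)+1) (((k:ℕ):ℤ)+1) * Ent n f g (((k:ℕ):ℤ)+1) (((j:ℕ):ℤ)+1)
      - Ent n f g (((i:ℕ):ℤ)+1) (((k:ℕ):ℤ)+1) * Bnt n f g (((k:ℕ):ℤ)+1) (((j:ℕ):ℤ)+1)) (2*n)]
  rw [sumF f g hn hf0 (by omega) (by omega) (by omega) (by omega)]
  rw [castEnt hn (adN n u v) (bdN n u) i j]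
  refine entCongr hn _ _ _ _ ?_ ?_ (by omega) (by omega) (by omega) (by omega)
  · intro x hx0 hxn
    by_cases hx : x = (n:ℤ)
    · rw [fd, if_pos hx, hx]
      show _ = adN n u v ((n:ℤ)).toNat
      rw [adN, show ((n:ℤ)).toNat = n by omega, if_pos rfl]
      show -(u ((n:ℤ)).toNat * (v (((n:ℤ)-1)).toNat + v ((n:ℤ)).toNat)) = _
      rw [show ((n:ℤ)).toNat = n by omega, show (((n:ℤ)-1)).toNat = n - 1 by omega]
    · rw [fd, if_neg hx]
      show f x * (g (x+1) - g x) = adN n u v x.toNat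
      rw [adN, if_neg (by omega)]
      show u x.toNat * (v ((x+1)).toNat - v x.toNat) = _
      rw [show ((x+1)).toNat = x.toNat + 1 by omega]
  · intro x hx1 hxn
    by_cases hx : x = (n:ℤ)-1
    · rw [gd, if_pos hx, hx]
      show _ = bdN n u (((n:ℤ)-1)).toNat
      rw [bdN, show (((n:ℤ)-1)).toNat = n - 1 by omega, if_pos rfl]
      show 2*(u ((n:ℤ)).toNat^2 + u (((n:ℤ)-1)).toNat^2 - u (((n:ℤ)-2)).toNat^2) = _
      rw [show ((n:ℤ)).toNat = n by omega, show (((n:ℤ)-1)).toNat = n - 1 by omega,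
        show (((n:ℤ)-2)).toNat = n - 2 by omega]
    · rw [gd, if_neg hx]
      show 2*(f x^2 - f (x-1)^2) = bdN n u x.toNat
      rw [bdN, if_neg (by omega)]
      show 2*(u x.toNat^2 - u ((x-1)).toNat^2) = _
      rw [show ((x-1)).toNat = x.toNat - 1 by omega]


lemma hasDerivAt_entry (hn : 4 ≤ n) (a b : ℝ → ℕ → ℝ)
    (ha : ∀ (t : ℝ), ∀ i ∈ Finset.Icc 1 (n - 1),
      HasDerivAt (fun s => a s i) (a t i * (b t (i + 1) - b t i)) t)
    (han : ∀ t : ℝ, HasDerivAt (fun s => a s n) (-(a t n * (b t (n - 1) + b t n))) t)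
    (hb : ∀ (t : ℝ), ∀ i ∈ Finset.Icc 1 (n - 2),
      HasDerivAt (fun s => b s i) (2 * ((a t i) ^ 2 - (a t (i - 1)) ^ 2)) t)
    (hbn : ∀ t : ℝ, HasDerivAt (fun s => b s n) (2 * ((a t n) ^ 2 - (a t (n - 1)) ^ 2)) t)
    (hbn1 : ∀ t : ℝ, HasDerivAt (fun s => b s (n - 1))
      (2 * ((a t n) ^ 2 + (a t (n - 1)) ^ 2 - (a t (n - 2)) ^ 2)) t)
    (t : ℝ) (i j : Fin (2*n)) :
    HasDerivAt (fun s => DnLax n (a s) (b s) i j)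
      (DnLax n (adN n (a t) (b t)) (bdN n (a t)) i j) t := by
  have ha' : ∀ i' : ℕ, 1 ≤ i' → i' ≤ n →
      HasDerivAt (fun s => a s i') (adN n (a t) (b t) i') t := by
    intro i' h1 h2
    by_cases h : i' = n
    · subst h; rw [adN, if_pos rfl]; exact han t
    · rw [adN, if_neg h]; exact ha t i' (Finset.mem_Icc.mpr ⟨h1, by omega⟩)
  have hb' : ∀ i' : ℕ, 1 ≤ i' → i' ≤ n →
      HasDerivAt (fun s => b s i') (bdN n (a t) i') t := by
    intro i' h1 h2
    by_cases h : i' = n - 1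
    · subst h; rw [bdN, if_pos rfl]; exact hbn1 t
    · by_cases h' : i' = n
      · subst h'; rw [bdN, if_neg h]; exact hbn t
      · rw [bdN, if_neg h]; exact hb t i' (Finset.mem_Icc.mpr ⟨h1, by omega⟩)
  have hi := i.isLt; have hj := j.isLt
  unfold DnLax
  simp only [Matrix.of_apply]
  by_cases h1 : (i:ℕ)+1 = (j:ℕ)+1
  · simp only [if_pos h1]
    by_cases h2 : (i:ℕ)+1 ≤ n
    · simp only [if_pos h2]; exact hb' _ (by omega) h2
    · simp only [if_neg h2]; exact (hb' _ (by omega) (by omega)).neg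
  · simp only [if_neg h1]
    by_cases h3 : (j:ℕ)+1 = (i:ℕ)+1+1
    · simp only [if_pos h3]
      by_cases h4 : (i:ℕ)+1 ≤ n-1
      · simp only [if_pos h4]; exact ha' _ (by omega) (by omega)
      · simp only [if_neg h4]
        by_cases h5 : (i:ℕ)+1 = n
        · simp only [if_pos h5]; exact hasDerivAt_const t 0
        · simp only [if_neg h5]; exact (ha' _ (by omega) (by omega)).neg
    · simp only [if_neg h3]
      by_cases h6 : (i:ℕ)+1 = (j:ℕ)+1+1
      · simp only [if_pos h6]
        by_cases h7 : (j:ℕ)+1 ≤ n-1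
        · simp only [if_pos h7]; exact ha' _ (by omega) (by omega)
        · simp only [if_neg h7]
          by_cases h8 : (j:ℕ)+1 = n
          · simp only [if_pos h8]; exact hasDerivAt_const t 0
          · simp only [if_neg h8]; exact (ha' _ (by omega) (by omega)).neg
      · simp only [if_neg h6]
        by_cases h9 : (i:ℕ)+1 = n-1 ∧ (j:ℕ)+1 = n+1
        · simp only [if_pos h9]; exact (ha' n (by omega) le_rfl).neg
        · simp only [if_neg h9]
          by_cases h10 : (i:ℕ)+1 = n+1 ∧ (j:ℕ)+1 = n-1
          · simp only [if_pos h10]; exact (ha' n (by omega) le_rfl).neg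
          · simp only [if_neg h10]
            by_cases h11 : (i:ℕ)+1 = n ∧ (j:ℕ)+1 = n+2
            · simp only [if_pos h11]; exact ha' n (by omega) le_rfl
            · simp only [if_neg h11]
              by_cases h12 : (i:ℕ)+1 = n+2 ∧ (j:ℕ)+1 = n
              · simp only [if_pos h12]; exact ha' n (by omega) le_rfl
              · simp only [if_neg h12]; exact hasDerivAt_const t 0

section calc2
variable {N : ℕ} (M Bm : ℝ → Matrix (Fin N) (Fin N) ℝ)

lemma hasDerivAt_pow_entry
    (hE : ∀ (t : ℝ) (i j : Fin N),
      HasDerivAt (fun s => M s i j) ((Bm t * M t - M t * Bm t) i j) t)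
    (k : ℕ) (t : ℝ) (i j : Fin N) :
    HasDerivAt (fun s => (M s ^ k) i j)
      ((Bm t * M t ^ k - M t ^ k * Bm t) i j) t := by
  induction k generalizing i j with
  | zero =>
    simp only [pow_zero]
    have : (Bm t * 1 - 1 * Bm t) = (0 : Matrix (Fin N) (Fin N) ℝ) := by
      rw [mul_one, one_mul, sub_self]
    rw [this]
    simpa using hasDerivAt_const t ((1 : Matrix (Fin N) (Fin N) ℝ) i j)
  | succ k ih =>
    have key : Bm t * M t ^ (k+1) - M t ^ (k+1) * Bm t
        = (Bm t * M t ^ k - M t ^ k * Bm t) * M t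
          + M t ^ k * (Bm t * M t - M t * Bm t) := by
      rw [pow_succ]; noncomm_ring
    rw [key]
    have h2 : HasDerivAt (fun s => ∑ m : Fin N, (M s ^ k) i m * M s m j)
        (∑ m : Fin N, ((Bm t * M t ^ k - M t ^ k * Bm t) i m * M t m j
          + (M t ^ k) i m * ((Bm t * M t - M t * Bm t) m j))) t :=
      HasDerivAt.fun_sum fun m _ => (ih i m).mul (hE t m j)
    have e1 : (fun s => (M s ^ (k+1)) i j)
        = fun s => ∑ m : Fin N, (M s ^ k) i m * M s m j := by
      funext s; rw [pow_succ, Matrix.mul_apply]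
    have e2 : ((Bm t * M t ^ k - M t ^ k * Bm t) * M t
          + M t ^ k * (Bm t * M t - M t * Bm t)) i j
        = ∑ m : Fin N, ((Bm t * M t ^ k - M t ^ k * Bm t) i m * M t m j
          + (M t ^ k) i m * ((Bm t * M t - M t * Bm t) m j)) := by
      rw [Matrix.add_apply, Matrix.mul_apply, Matrix.mul_apply, ← Finset.sum_add_distrib]
    rw [e1, e2]
    exact h2

lemma hasDerivAt_trace_pow
    (hE : ∀ (t : ℝ) (i j : Fin N),
      HasDerivAt (fun s => M s i j) ((Bm t * M t - M t * Bm t) i j) t)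
    (k : ℕ) (t : ℝ) :
    HasDerivAt (fun s => Matrix.trace (M s ^ k)) 0 t := by
  have h := HasDerivAt.fun_sum (x := t) (u := (Finset.univ : Finset (Fin N)))
    (A := fun i s => (M s ^ k) i i)
    (A' := fun i => (Bm t * M t ^ k - M t ^ k * Bm t) i i)
    (fun i _ => hasDerivAt_pow_entry M Bm hE k t i i)
  have e : ∑ i : Fin N, (Bm t * M t ^ k - M t ^ k * Bm t) i i = 0 := by
    have h2 : Matrix.trace (Bm t * M t ^ k - M t ^ k * Bm t) = 0 := by
      rw [Matrix.trace_sub, Matrix.trace_mul_comm]; ring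
    simpa [Matrix.trace, Matrix.diag] using h2
  rw [e] at h
  have e2 : (fun s => Matrix.trace (M s ^ k)) = fun s => ∑ i : Fin N, (M s ^ k) i i := by
    funext s; simp [Matrix.trace, Matrix.diag]
  rw [e2]
  exact h

lemma hasDerivAt_det
    (hE : ∀ (t : ℝ) (i j : Fin N),
      HasDerivAt (fun s => M s i j) ((Bm t * M t - M t * Bm t) i j) t)
    (t : ℝ) :
    HasDerivAt (fun s => (M s).det) 0 t := by
  classical
  set C : Matrix (Fin N) (Fin N) ℝ := Bm t * M t - M t * Bm t with hC
  -- Leibniz derivative of det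
  have h1 : HasDerivAt (fun s => (M s).det)
      (∑ σ : Equiv.Perm (Fin N), ((Equiv.Perm.sign σ : ℤ) : ℝ)
        * ∑ i : Fin N, (∏ j ∈ Finset.univ.erase i, M t (σ j) j) • C (σ i) i) t := by
    have e : (fun s => (M s).det)
        = fun s => ∑ σ : Equiv.Perm (Fin N), ((Equiv.Perm.sign σ : ℤ) : ℝ)
            * ∏ i : Fin N, M s (σ i) i := by
      funext s; rw [Matrix.det_apply]
      congr 1; funext σ; rw [Units.smul_def, zsmul_eq_mul]
    rw [e]
    refine HasDerivAt.fun_sum fun σ _ => ?_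
    exact ((HasDerivAt.fun_finsetProd (fun i _ => hE t (σ i) i))).const_mul _
  -- rewrite the derivative as a trace
  have e3 : (∑ σ : Equiv.Perm (Fin N), ((Equiv.Perm.sign σ : ℤ) : ℝ)
        * ∑ i : Fin N, (∏ j ∈ Finset.univ.erase i, M t (σ j) j) • C (σ i) i)
      = Matrix.trace ((M t).adjugate * C) := by
    have e4 : ∀ i : Fin N, ((M t).updateCol i (fun r => C r i)).det
        = ∑ σ : Equiv.Perm (Fin N), ((Equiv.Perm.sign σ : ℤ) : ℝ)
            * (C (σ i) i * ∏ j ∈ Finset.univ.erase i, M t (σ j) j) := by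
      intro i
      rw [Matrix.det_apply]
      congr 1; funext σ
      rw [Units.smul_def, zsmul_eq_mul]
      congr 1
      rw [← Finset.mul_prod_erase Finset.univ _ (Finset.mem_univ i)]
      rw [Matrix.updateCol_apply, if_pos rfl]
      congr 1
      refine Finset.prod_congr rfl fun j hj => ?_
      rw [Matrix.updateCol_apply, if_neg (Finset.ne_of_mem_erase hj)]
    have e5 : Matrix.trace ((M t).adjugate * C)
        = ∑ i : Fin N, ((M t).updateCol i (fun r => C r i)).det := by
      have : ∀ i : Fin N, ((M t).updateCol i (fun r => C r i)).det
          = ((M t).adjugate.mulVec (fun r => C r i)) i := by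
        intro i
        rw [← Matrix.cramer_eq_adjugate_mulVec, Matrix.cramer_apply]
      simp only [this]
      simp [Matrix.trace, Matrix.diag, Matrix.mul_apply, Matrix.mulVec, dotProduct]
    rw [e5]
    simp_rw [Finset.mul_sum]
    rw [Finset.sum_comm]
    refine Finset.sum_congr rfl fun i _ => ?_
    rw [e4 i]
    refine Finset.sum_congr rfl fun σ _ => ?_
    rw [smul_eq_mul]; ring
  have e6 : Matrix.trace ((M t).adjugate * C) = 0 := by
    have t1 : Matrix.trace ((M t).adjugate * (Bm t * M t))
        = Matrix.trace (((M t).det • (1 : Matrix (Fin N) (Fin N) ℝ)) * Bm t) := by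
      rw [← mul_assoc, Matrix.trace_mul_comm, ← mul_assoc, Matrix.mul_adjugate]
    have t2 : Matrix.trace ((M t).adjugate * (M t * Bm t))
        = Matrix.trace (((M t).det • (1 : Matrix (Fin N) (Fin N) ℝ)) * Bm t) := by
      rw [← mul_assoc, Matrix.adjugate_mul]
    rw [hC, mul_sub, Matrix.trace_sub, t1, t2, sub_self]
  rw [e3, e6] at h1
  exact h1
end calc2


end DnAux

/-- Along any differentiable solution of the `D_n` Toda equations (`n ≥ 4`,
with `a_0 := 0`), the functions `H_{2i}(t) = (1/2i)·Tr(L(t)^{2i})` (for every positive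
integer `i`) and `det L(t)` are constant in `t`. -/
theorem Dn_toda_integrals (n : ℕ) (hn : 4 ≤ n)
    (a b : ℝ → ℕ → ℝ)
    (ha0 : ∀ t : ℝ, a t 0 = 0)
    (ha : ∀ (t : ℝ), ∀ i ∈ Finset.Icc 1 (n - 1),
      HasDerivAt (fun s => a s i) (a t i * (b t (i + 1) - b t i)) t)
    (han : ∀ t : ℝ, HasDerivAt (fun s => a s n) (-(a t n * (b t (n - 1) + b t n))) t)
    (hb : ∀ (t : ℝ), ∀ i ∈ Finset.Icc 1 (n - 2),
      HasDerivAt (fun s => b s i) (2 * ((a t i) ^ 2 - (a t (i - 1)) ^ 2)) t)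
    (hbn : ∀ t : ℝ, HasDerivAt (fun s => b s n) (2 * ((a t n) ^ 2 - (a t (n - 1)) ^ 2)) t)
    (hbn1 : ∀ t : ℝ, HasDerivAt (fun s => b s (n - 1))
      (2 * ((a t n) ^ 2 + (a t (n - 1)) ^ 2 - (a t (n - 2)) ^ 2)) t) :
    (∀ i : ℕ, 0 < i → ∀ t : ℝ,
      (1 / (2 * (i : ℝ))) * Matrix.trace (DnLax n (a t) (b t) ^ (2 * i))
        = (1 / (2 * (i : ℝ))) * Matrix.trace (DnLax n (a 0) (b 0) ^ (2 * i))) ∧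
    (∀ t : ℝ, (DnLax n (a t) (b t)).det = (DnLax n (a 0) (b 0)).det) := by
  have hE : ∀ (t : ℝ) (i j : Fin (2*n)),
      HasDerivAt (fun s => DnLax n (a s) (b s) i j)
        ((BmatAux n (a t) (b t) * DnLax n (a t) (b t)
          - DnLax n (a t) (b t) * BmatAux n (a t) (b t)) i j) t := by
    intro t i j
    have hc : BmatAux n (a t) (b t) * DnLax n (a t) (b t)
        - DnLax n (a t) (b t) * BmatAux n (a t) (b t)
        = DnLax n (adN n (a t) (b t)) (bdN n (a t)) :=
      commutatorAux hn (a t) (b t) (ha0 t)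
    rw [hc]
    exact hasDerivAt_entry hn a b ha han hb hbn hbn1 t i j
  have hTr : ∀ (k : ℕ) (t : ℝ),
      HasDerivAt (fun s => Matrix.trace (DnLax n (a s) (b s) ^ k)) 0 t :=
    fun k t => hasDerivAt_trace_pow (fun s => DnLax n (a s) (b s))
      (fun s => BmatAux n (a s) (b s)) hE k t
  have hDet : ∀ t : ℝ, HasDerivAt (fun s => (DnLax n (a s) (b s)).det) 0 t :=
    fun t => hasDerivAt_det (fun s => DnLax n (a s) (b s))
      (fun s => BmatAux n (a s) (b s)) hE t
  constructor
  · intro i hi t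
    have key : Matrix.trace (DnLax n (a t) (b t) ^ (2*i))
        = Matrix.trace (DnLax n (a 0) (b 0) ^ (2*i)) :=
      is_const_of_deriv_eq_zero (fun s => (hTr (2*i) s).differentiableAt)
        (fun s => (hTr (2*i) s).deriv) t 0
    rw [key]
  · intro t
    exact is_const_of_deriv_eq_zero (fun s => (hDet s).differentiableAt)
      (fun s => (hDet s).deriv) t 0
end
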